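/- arXiv:math/0210465 — 6 statements merged into one kernel-verified Lean document; each statement's English description precedes it below -/
import Mathlib

section
/- The number of one-dimensional linear subspaces ℓ of F₃⁵ with q(ℓ) = 1 is exactly 45. -/
/-!
Lines of `𝔽₃⁵` are the points of its projectivization, and every nonzero vector lies on exactly
one line, which contains `|𝔽₃ˣ| = 2` nonzero vectors. Since `c² = 1` for `c ∈ 𝔽₃ˣ`, the form `q`
is constant on the nonzero vectors of a line, so the lines with `q = 1` are counted by the `90`
vectors with `q(v) = 1`, two on each line.
-/

open scoped LinearAlgebra.Projectivization Matrix

section Lines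

variable {k V : Type*} [DivisionRing k] [AddCommGroup V] [Module k V]

theorem Projectivization.card_subtype_ne_zero_and_eq_card_subtype_mul (P : V → Prop)
    (Q : ℙ k V → Prop) (hPQ : ∀ v (hv : v ≠ 0), P v ↔ Q (mk k v hv)) :
    Nat.card {v : V // v ≠ 0 ∧ P v} = Nat.card {p // Q p} * (Nat.card k - 1) := by
  let e : {v : V // v ≠ 0 ∧ P v} ≃ {p // Q p} × kˣ :=
    (Equiv.subtypeSubtypeEquivSubtypeInter _ P).symm.trans <|
      ((nonZeroEquivProjectivizationProdUnits k V).subtypeEquiv fun v ↦ hPQ v.1 v.2).trans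
        Equiv.prodSubtypeFstEquivSubtypeProd
  rw [Nat.card_congr e, Nat.card_prod, Nat.card_units]

theorem forall_mem_span_singleton_ne_zero_iff {P : V → Prop}
    (hP : ∀ (c : k) v, c ≠ 0 → (P (c • v) ↔ P v)) {v : V} (hv : v ≠ 0) :
    (∀ w ∈ k ∙ v, w ≠ 0 → P w) ↔ P v := by
  refine ⟨fun h ↦ h v (Submodule.mem_span_singleton_self v) hv, fun h w hw hw0 ↦ ?_⟩
  obtain ⟨c, rfl⟩ := Submodule.mem_span_singleton.mp hw
  exact (hP c v (by rintro rfl; simp at hw0)).mpr h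

theorem card_lines_forall_mul_eq_card (P : V → Prop)
    (hP : ∀ (c : k) v, c ≠ 0 → (P (c • v) ↔ P v)) :
    Nat.card {ℓ : Submodule k V // Module.finrank k ℓ = 1 ∧ ∀ v ∈ ℓ, v ≠ 0 → P v} *
      (Nat.card k - 1) = Nat.card {v : V // v ≠ 0 ∧ P v} := by
  let e : {p : ℙ k V // ∀ v ∈ p.submodule, v ≠ 0 → P v} ≃
      {ℓ : Submodule k V // Module.finrank k ℓ = 1 ∧ ∀ v ∈ ℓ, v ≠ 0 → P v} :=
    (Equiv.subtypeEquiv (Projectivization.equivSubmodule k V) fun _ ↦ Iff.rfl).trans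
      (Equiv.subtypeSubtypeEquivSubtypeInter _ fun ℓ ↦ ∀ v ∈ ℓ, v ≠ 0 → P v)
  rw [← Nat.card_congr e]
  exact (Projectivization.card_subtype_ne_zero_and_eq_card_subtype_mul P _
    fun v hv ↦ (forall_mem_span_singleton_ne_zero_iff hP hv).symm).symm

end Lines

theorem ZMod.three_dotProduct_self_smul_eq_one_iff {ι : Type*} [Fintype ι] (c : ZMod 3)
    (v : ι → ZMod 3) (hc : c ≠ 0) : (c • v) ⬝ᵥ (c • v) = 1 ↔ v ⬝ᵥ v = 1 := by
  have hcc : c * c = 1 := by revert c; decide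
  rw [smul_dotProduct, dotProduct_smul, smul_smul, smul_eq_mul, hcc, one_mul]

theorem ZMod.three_card_dotProduct_self_eq_one_fin_five :
    Nat.card {v : Fin 5 → ZMod 3 // v ≠ 0 ∧ v ⬝ᵥ v = 1} = 90 := by
  rw [Nat.card_eq_fintype_card]
  decide

/-- The number of one-dimensional linear subspaces `ℓ` of `𝔽₃⁵` on which the standard
quadratic form `q(x) = ∑ xᵢ²` takes the value `1` (on the nonzero vectors of `ℓ`)
is exactly `45`. -/
theorem num_q_eq_one_lines_F3_5 :
    Nat.card {ℓ : Submodule (ZMod 3) (Fin 5 → ZMod 3) //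
      Module.finrank (ZMod 3) ℓ = 1 ∧
      ∀ v : Fin 5 → ZMod 3, v ∈ ℓ → v ≠ 0 → (∑ i, v i * v i) = 1} = 45 := by
  have h := card_lines_forall_mul_eq_card (k := ZMod 3) (fun v : Fin 5 → ZMod 3 ↦ v ⬝ᵥ v = 1)
    ZMod.three_dotProduct_self_smul_eq_one_iff
  rw [ZMod.three_card_dotProduct_self_eq_one_fin_five, Nat.card_zmod] at h
  exact Nat.eq_of_mul_eq_mul_right two_pos h
end

section
/- Let z be a line in F₃⁵ with q(z) = −1. Then the number of isotropic lines perpendicular to z (i.e. lines ℓ with q(ℓ) = 0 and ℓ ⊆ z^⊥) is exactly 10. (Geometrically: each boundary divisor of the moduli space of marked cubic surfaces meets exactly 10 cusp divisors.) -/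
/-!
A line of `𝔽₃⁵` holds exactly two nonzero vectors, so the isotropic lines in `z^⊥` are half
as many as the nonzero isotropic vectors orthogonal to a generator `u` of `z`. As the standard
form has discriminant `1` and `q(u) = -1`, the quadratic space `u^⊥` is nondegenerate of
dimension `4` and discriminant `-1`, a nonsquare in `𝔽₃`; it is therefore elliptic, and its
quadric has `3² + 1 = 10` points, i.e. `20` nonzero isotropic vectors. That count is checked
exhaustively over all `u`.
-/

open Module Submodule Matrix

section Lines

variable {K V : Type*} [Field K] [AddCommGroup V] [Module K V]

theorem Submodule.card_subtype_ne_zero_of_finrank_eq_one [Finite K] {ℓ : Submodule K V}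
    (hℓ : finrank K ℓ = 1) : Nat.card {x : ℓ // x ≠ 0} = Nat.card K - 1 := by
  have : Module.Finite K ℓ := Module.finite_of_finrank_eq_succ hℓ
  have : Finite ℓ := Module.finite_of_finite K
  have : Fintype ℓ := Fintype.ofFinite ℓ
  have : Fintype K := Fintype.ofFinite K
  classical
  rw [Nat.card_eq_fintype_card, Fintype.card_subtype_compl, Fintype.card_subtype_eq,
    card_eq_pow_finrank (K := K), hℓ, pow_one, Nat.card_eq_fintype_card]

theorem card_subtype_ne_zero_eq_card_lines_mul [Finite K] [Finite V] (P : V → Prop)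
    (hP : ∀ (c : K) (v : V), c ≠ 0 → P v → P (c • v)) :
    Nat.card {v : V // v ≠ 0 ∧ P v} =
      Nat.card {ℓ : Submodule K V // finrank K ℓ = 1 ∧ ∀ v ∈ ℓ, v ≠ 0 → P v} *
        (Nat.card K - 1) := by
  set L := {ℓ : Submodule K V // finrank K ℓ = 1 ∧ ∀ v ∈ ℓ, v ≠ 0 → P v}
  let line : {v : V // v ≠ 0 ∧ P v} → L := fun v =>
    ⟨K ∙ (v : V), finrank_span_singleton v.2.1, fun w hw hw0 => by
      obtain ⟨c, rfl⟩ := mem_span_singleton.mp hw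
      exact hP c v (left_ne_zero_of_smul hw0) v.2.2⟩
  have fiber (ℓ : L) : {v // line v = ℓ} ≃ {x : ℓ.1 // x ≠ 0} :=
    { toFun := fun v =>
        ⟨⟨v.1, (congrArg Subtype.val v.2 : K ∙ (v.1 : V) = ℓ.1) ▸ mem_span_singleton_self _⟩,
          Subtype.coe_ne_coe.mp v.1.2.1⟩
      invFun := fun x =>
        have hx0 : (x.1 : V) ≠ 0 := Subtype.coe_ne_coe.mpr x.2
        ⟨⟨x.1, hx0, ℓ.2.2 _ x.1.2 hx0⟩,
          Subtype.ext (eq_span_singleton_of_mem_of_finrank_eq_one ℓ.2.1 x.1.2 hx0).symm⟩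
      left_inv := fun v => rfl
      right_inv := fun x => rfl }
  have : Finite (Submodule K V) := Finite.of_injective _ SetLike.coe_injective
  have : Fintype L := Fintype.ofFinite L
  rw [Nat.card_congr (Equiv.sigmaFiberEquiv line).symm, Nat.card_sigma,
    Finset.sum_congr rfl fun ℓ _ => (Nat.card_congr (fiber ℓ)).trans
      (card_subtype_ne_zero_of_finrank_eq_one ℓ.2.1),
    Finset.sum_const, smul_eq_mul, Finset.card_univ, ← Nat.card_eq_fintype_card]

end Lines

theorem forall_mem_span_singleton_dotProduct_eq_zero_iff {K n : Type*} [Field K] [Fintype n]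
    (ℓ : Submodule K (n → K)) (u : n → K) :
    (∀ v ∈ ℓ, ∀ w ∈ K ∙ u, v ⬝ᵥ w = 0) ↔ ∀ v ∈ ℓ, v ≠ 0 → v ⬝ᵥ u = 0 := by
  refine ⟨fun h v hv _ => h v hv u (mem_span_singleton_self u), fun h v hv w hw => ?_⟩
  obtain ⟨c, rfl⟩ := mem_span_singleton.mp hw
  obtain rfl | hv0 := eq_or_ne v 0
  · exact zero_dotProduct _
  · rw [dotProduct_smul, h v hv hv0, smul_zero]

set_option maxRecDepth 4000 in
theorem card_isotropic_orthogonal_of_dotProduct_self_eq_neg_one :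
    ∀ u : Fin 5 → ZMod 3, u ⬝ᵥ u = -1 →
      Fintype.card {v : Fin 5 → ZMod 3 // v ≠ 0 ∧ v ⬝ᵥ v = 0 ∧ v ⬝ᵥ u = 0} = 20 := by
  decide

/-- If `z` is a line in `𝔽₃⁵` with `q(z) = −1` (for `q(x) = ∑ xᵢ²`), then there are
exactly `10` isotropic lines perpendicular to `z`. -/
theorem ten_isotropic_lines_perp_to_minus_one_line
    (z : Submodule (ZMod 3) (Fin 5 → ZMod 3))
    (hz : Module.finrank (ZMod 3) z = 1)
    (hqz : ∀ v : Fin 5 → ZMod 3, v ∈ z → v ≠ 0 → (∑ i, v i * v i) = -1) :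
    Nat.card {ℓ : Submodule (ZMod 3) (Fin 5 → ZMod 3) //
      Module.finrank (ZMod 3) ℓ = 1 ∧
      (∀ v : Fin 5 → ZMod 3, v ∈ ℓ → v ≠ 0 → (∑ i, v i * v i) = 0) ∧
      ∀ v : Fin 5 → ZMod 3, v ∈ ℓ → ∀ w : Fin 5 → ZMod 3, w ∈ z →
        (∑ i, v i * w i) = 0} = 10 := by
  obtain ⟨u, hu, hu0⟩ := exists_mem_ne_zero_of_ne_bot (by rintro rfl; simp at hz : z ≠ ⊥)
  obtain rfl := eq_span_singleton_of_mem_of_finrank_eq_one hz hu hu0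
  have hlines : Nat.card {ℓ : Submodule (ZMod 3) (Fin 5 → ZMod 3) // finrank (ZMod 3) ℓ = 1 ∧
      ∀ v ∈ ℓ, v ≠ 0 → v ⬝ᵥ v = 0 ∧ v ⬝ᵥ u = 0} = 10 := by
    have hcount := card_subtype_ne_zero_eq_card_lines_mul (K := ZMod 3)
      (fun v : Fin 5 → ZMod 3 => v ⬝ᵥ v = 0 ∧ v ⬝ᵥ u = 0)
      fun c v _ ⟨hvv, hvu⟩ => by simp [hvv, hvu]
    rw [Nat.card_eq_fintype_card, card_isotropic_orthogonal_of_dotProduct_self_eq_neg_one u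
      (hqz u (mem_span_singleton_self u) hu0), Nat.card_zmod] at hcount
    omega
  rw [← hlines]
  refine Nat.card_congr (Equiv.subtypeEquivRight fun ℓ => and_congr_right fun _ => ?_)
  simp only [← dotProduct.eq_1, forall_mem_span_singleton_dotProduct_eq_zero_iff]
  grind
end

section
/- Let t be a line in F₃⁵ with q(t) = 1. Then the number of isotropic lines perpendicular to t (i.e. lines ℓ with q(ℓ) = 0 and ℓ ⊆ t^⊥) is exactly 16. (Geometrically: each tritangent divisor of the moduli space of marked cubic surfaces meets exactly 16 cusp divisors.) -/
/-!
Lines of `𝔽₃⁵` are the points of the projective space `ℙ 𝔽₃ 𝔽₃⁵`, and the isotropic lines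
perpendicular to `t` are the points `p` with `p ⊥ p` and `p ⊥ t`. Every point has exactly
`|𝔽₃ˣ| = 2` nonzero representatives, so it suffices to count the nonzero vectors `w` with
`w ⬝ᵥ w = 0` and `w ⬝ᵥ v = 0`, where `v` spans `t`. There are `32` of them for every `v` with
`v ⬝ᵥ v = 1`, as `v^⊥` is then a hyperbolic quadratic space of dimension `4` over `𝔽₃`, which has
`(3² - 1)(3 + 1)` nonzero isotropic vectors; this count is checked by evaluation.
-/

open Matrix

open scoped LinearAlgebra.Projectivization

namespace Projectivization

variable {K V : Type*}

theorem natCard_subtype_mk [DivisionRing K] [AddCommGroup V] [Module K V] (P : ℙ K V → Prop) :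
    Nat.card {v : {v : V // v ≠ 0} // P (mk K v v.2)} = Nat.card {p // P p} * Nat.card Kˣ := by
  rw [← Nat.card_prod]
  exact Nat.card_congr <|
    ((nonZeroEquivProjectivizationProdUnits K V).subtypeEquiv fun _ ↦ Iff.rfl).trans
      Equiv.prodSubtypeFstEquivSubtypeProd

theorem natCard_subtype_finrank_eq_one [DivisionRing K] [AddCommGroup V] [Module K V]
    (Q : Submodule K V → Prop) :
    Nat.card {H : Submodule K V // Module.finrank K H = 1 ∧ Q H} =
      Nat.card {p : ℙ K V // Q p.submodule} :=
  Nat.card_congr <| (Equiv.subtypeSubtypeEquivSubtypeInter _ Q).symm.trans <|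
    ((equivSubmodule K V).subtypeEquiv fun _ ↦ Iff.rfl).symm

variable {m : Type*} [Fintype m] [Field K]

theorem orthogonal_iff_forall_mem_submodule {p q : ℙ K (m → K)} :
    orthogonal p q ↔ ∀ v ∈ p.submodule, ∀ w ∈ q.submodule, v ⬝ᵥ w = 0 := by
  induction p with | h v hv => induction q with | h w hw =>
  simp only [orthogonal_mk, submodule_mk, Submodule.mem_span_singleton, forall_exists_index,
    forall_apply_eq_imp_iff, smul_dotProduct, dotProduct_smul, smul_eq_mul]
  exact ⟨fun h a b ↦ by simp [h], fun h ↦ by simpa using h 1 1⟩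

theorem orthogonal_self_iff_forall_mem_submodule {p : ℙ K (m → K)} :
    orthogonal p p ↔ ∀ v ∈ p.submodule, v ≠ 0 → v ⬝ᵥ v = 0 := by
  induction p with | h v hv =>
  simp only [orthogonal_mk, submodule_mk, Submodule.mem_span_singleton, forall_exists_index,
    forall_apply_eq_imp_iff, smul_dotProduct, dotProduct_smul, smul_eq_mul]
  exact ⟨fun h a _ ↦ by simp [h], fun h ↦ by simpa using h 1 (by simpa using hv)⟩

end Projectivization

set_option maxRecDepth 100000 in
theorem card_isotropic_orthogonal_of_dotProduct_self_eq_one :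
    ∀ v : Fin 5 → ZMod 3, v ⬝ᵥ v = 1 →
      (Finset.univ.filter fun w : Fin 5 → ZMod 3 ↦ w ≠ 0 ∧ w ⬝ᵥ w = 0 ∧ w ⬝ᵥ v = 0).card = 32 := by
  decide

open Projectivization in
/-- If `t` is a line in `𝔽₃⁵` with `q(t) = 1` (for `q(x) = ∑ xᵢ²`), then there are
exactly `16` isotropic lines perpendicular to `t`. -/
theorem sixteen_isotropic_lines_perp_to_plus_one_line
    (t : Submodule (ZMod 3) (Fin 5 → ZMod 3))
    (ht : Module.finrank (ZMod 3) t = 1)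
    (hqt : ∀ v : Fin 5 → ZMod 3, v ∈ t → v ≠ 0 → (∑ i, v i * v i) = 1) :
    Nat.card {ℓ : Submodule (ZMod 3) (Fin 5 → ZMod 3) //
      Module.finrank (ZMod 3) ℓ = 1 ∧
      (∀ v : Fin 5 → ZMod 3, v ∈ ℓ → v ≠ 0 → (∑ i, v i * v i) = 0) ∧
      ∀ v : Fin 5 → ZMod 3, v ∈ ℓ → ∀ w : Fin 5 → ZMod 3, w ∈ t →
        (∑ i, v i * w i) = 0} = 16 := by
  set p₀ := mk'' t ht
  have ht₀ : t = p₀.submodule := (submodule_mk'' t ht).symm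
  have hq₀ : p₀.rep ⬝ᵥ p₀.rep = 1 :=
    hqt _ (by rw [ht₀, submodule_eq]; exact Submodule.mem_span_singleton_self _) p₀.rep_nonzero
  have hvectors : Nat.card {p // orthogonal p p ∧ orthogonal p p₀} * Nat.card (ZMod 3)ˣ = 32 := by
    rw [← natCard_subtype_mk, ← card_isotropic_orthogonal_of_dotProduct_self_eq_one _ hq₀,
      ← Fintype.card_subtype, ← Nat.card_eq_fintype_card]
    conv_lhs => rw [← mk_rep p₀]
    exact Nat.card_congr <| Equiv.subtypeSubtypeEquivSubtypeInter (· ≠ 0)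
      fun w ↦ w ⬝ᵥ w = 0 ∧ w ⬝ᵥ p₀.rep = 0
  have hpoints : Nat.card {p // orthogonal p p ∧ orthogonal p p₀} = 16 := by
    rw [Nat.card_eq_fintype_card (α := (ZMod 3)ˣ), ZMod.card_units] at hvectors
    omega
  rw [natCard_subtype_finrank_eq_one, ht₀, ← hpoints]
  simp only [orthogonal_self_iff_forall_mem_submodule, orthogonal_iff_forall_mem_submodule]
  rfl
end

section
/- Let v be an isotropic line in F₃⁵ (q(v) = 0, v ≠ 0). Then the number of lines w with q(w) = −1 and w ⊆ v^⊥ is exactly 9. (Geometrically: each cusp divisor meets exactly 9 boundary divisors.) -/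
/-!
A line spanned by `w` has exactly the nonzero vectors `±w`, and since `c² = 1` for every
`c ∈ 𝔽₃ˣ`, both conditions `q(w) = -1` and `b(w, v) = 0` depend only on the line. Hence the
lines in question correspond two-to-one to the vectors `w ∈ v^⊥` with `q(w) = -1`, of which
there are `18`: `q` is constant on the cosets of `⟨v⟩` in `v^⊥`, and the nondegenerate ternary
space `v^⊥ / ⟨v⟩` has `6` vectors of norm `-1`.
-/

open Finset Module Projectivization
open scoped LinearAlgebra.Projectivization

section Lines

variable {K V : Type*} [Field K] [AddCommGroup V] [Module K V] {P : V → Prop}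

theorem Projectivization.card_subtype_ne_zero_eq_mul_card_units
    (hP : ∀ (c : Kˣ) (w : V), P (c • w) ↔ P w) :
    Nat.card {w : V // w ≠ 0 ∧ P w} = Nat.card {p : ℙ K V // P p.rep} * Nat.card Kˣ := by
  have hrep (x : {w : V // w ≠ 0}) : P x ↔ P (mk K x.1 x.2).rep := by
    obtain ⟨c, hc⟩ := exists_smul_eq_mk_rep K x.1 x.2
    rw [← hc, hP]
  rw [← Nat.card_prod]
  exact Nat.card_congr <| (Equiv.subtypeSubtypeEquivSubtypeInter _ _).symm.trans <|
    ((nonZeroEquivProjectivizationProdUnits K V).subtypeEquiv hrep).trans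
      Equiv.prodSubtypeFstEquivSubtypeProd

theorem Projectivization.card_subtype_rep_eq_card_lines
    (hP : ∀ (c : Kˣ) (w : V), P (c • w) ↔ P w) :
    Nat.card {p : ℙ K V // P p.rep} =
      Nat.card {ℓ : Submodule K V // finrank K ℓ = 1 ∧ ∀ w ∈ ℓ, w ≠ 0 → P w} := by
  have hline (p : ℙ K V) : P p.rep ↔ ∀ w ∈ p.submodule, w ≠ 0 → P w := by
    rw [submodule_eq]
    refine ⟨fun h w hw hw0 => ?_, fun h => h _ (Submodule.mem_span_singleton_self _) p.rep_nonzero⟩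
    obtain ⟨c, rfl⟩ := Submodule.mem_span_singleton.mp hw
    have hc : c ≠ 0 := by rintro rfl; exact hw0 (zero_smul K _)
    simpa only [Units.smul_mk0] using (hP (Units.mk0 c hc) p.rep).mpr h
  exact Nat.card_congr <| ((equivSubmodule K V).subtypeEquiv hline).trans
    (Equiv.subtypeSubtypeEquivSubtypeInter _ _)

theorem card_lines_mul_card_units (hP : ∀ (c : Kˣ) (w : V), P (c • w) ↔ P w) :
    Nat.card {ℓ : Submodule K V // finrank K ℓ = 1 ∧ ∀ w ∈ ℓ, w ≠ 0 → P w} * Nat.card Kˣ =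
      Nat.card {w : V // w ≠ 0 ∧ P w} := by
  rw [card_subtype_ne_zero_eq_mul_card_units hP, card_subtype_rep_eq_card_lines hP]

end Lines

theorem ZMod.three_units_mul_self (u : (ZMod 3)ˣ) : (u : ZMod 3) * u = 1 := by
  rw [← Units.val_mul, ← sq, ZMod.units_pow_card_sub_one_eq_one 3 u, Units.val_one]

theorem units_smul_minus_one_perp_iff {ι : Type*} [Fintype ι] (v : ι → ZMod 3) (u : (ZMod 3)ˣ)
    (w : ι → ZMod 3) :
    ((u • w) ⬝ᵥ (u • w) = -1 ∧ (u • w) ⬝ᵥ v = 0) ↔ (w ⬝ᵥ w = -1 ∧ w ⬝ᵥ v = 0) := by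
  simp only [Units.smul_def, smul_dotProduct, dotProduct_smul, smul_eq_mul, ← mul_assoc,
    ZMod.three_units_mul_self, one_mul, Units.mul_right_eq_zero]

theorem card_minus_one_perp_of_isotropic : ∀ v : Fin 5 → ZMod 3, v ≠ 0 → v ⬝ᵥ v = 0 →
    #{w | w ⬝ᵥ w = -1 ∧ w ⬝ᵥ v = 0} = 18 := by
  decide +kernel

/-- If `v ∈ 𝔽₃⁵` is a nonzero isotropic vector (`q(v) = 0` for `q(x) = ∑ xᵢ²`), then the
subspace `v^⊥` contains exactly `9` lines `w` with `q(w) = −1`. -/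
theorem nine_minus_one_lines_in_perp_of_isotropic
    (v : Fin 5 → ZMod 3) (hv : v ≠ 0) (hqv : (∑ i, v i * v i) = 0) :
    Nat.card {ℓ : Submodule (ZMod 3) (Fin 5 → ZMod 3) //
      Module.finrank (ZMod 3) ℓ = 1 ∧
      (∀ w : Fin 5 → ZMod 3, w ∈ ℓ → w ≠ 0 → (∑ i, w i * w i) = -1) ∧
      ∀ w : Fin 5 → ZMod 3, w ∈ ℓ → (∑ i, w i * v i) = 0} = 9 := by
  have hlines := card_lines_mul_card_units (P := fun w => w ⬝ᵥ w = -1 ∧ w ⬝ᵥ v = 0)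
    (units_smul_minus_one_perp_iff v)
  have hvectors : Nat.card {w : Fin 5 → ZMod 3 // w ≠ 0 ∧ w ⬝ᵥ w = -1 ∧ w ⬝ᵥ v = 0} = 18 := by
    rw [Nat.card_eq_fintype_card, Fintype.card_subtype,
      ← card_minus_one_perp_of_isotropic v hv hqv]
    refine congrArg card (filter_congr fun w _ => and_iff_right_of_imp fun hw h0 => ?_)
    simp [h0] at hw
  have hunits : Nat.card (ZMod 3)ˣ = 2 := by
    rw [Nat.card_eq_fintype_card, ZMod.card_units]
  rw [hvectors, hunits] at hlines
  calc _ = Nat.card {ℓ : Submodule (ZMod 3) (Fin 5 → ZMod 3) //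
          finrank (ZMod 3) ℓ = 1 ∧ ∀ w ∈ ℓ, w ≠ 0 → w ⬝ᵥ w = -1 ∧ w ⬝ᵥ v = 0} := by
        refine Nat.card_congr (Equiv.subtypeEquivRight fun ℓ => and_congr_right fun _ => ?_)
        refine ⟨fun ⟨hq, hb⟩ w hw hw0 => ⟨hq w hw hw0, hb w hw⟩,
          fun h => ⟨fun w hw hw0 => (h w hw hw0).1, fun w hw => ?_⟩⟩
        rcases eq_or_ne w 0 with rfl | hw0
        exacts [zero_dotProduct v, (h w hw hw0).2]
    _ = 9 := by omega
end

section
/- Let α, β, γ, δ, t be pairwise perpendicular lines in F₃⁵ with q(α) = q(β) = q(γ) = q(δ) = −1 and q(t) = 1. Then the number of isotropic lines n (i.e. q(n) = 0) which are perpendicular to at least one element of {α, β, γ, δ, t} is exactly 24. -/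
/-!
Choose spanning vectors `u i` of the five lines. They are pairwise orthogonal and anisotropic,
hence form a basis, and in the coordinates `c ↦ ∑ cᵢ uᵢ` the form becomes
`c₄² - c₀² - c₁² - c₂² - c₃²` while perpendicularity to `uᵢ` becomes `cᵢ = 0`. The count is
therefore that of the model form: `48` nonzero isotropic vectors with a vanishing coordinate,
two on each line.
-/

open Module Matrix
open scoped LinearAlgebra.Projectivization

namespace Projectivization

variable {K V : Type*} [DivisionRing K] [AddCommGroup V] [Module K V]

theorem card_lines_mul_card_units (R : Submodule K V → Prop) :
    Nat.card {n : Submodule K V // finrank K n = 1 ∧ R n} * Nat.card Kˣ =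
      Nat.card {v : V // v ≠ 0 ∧ R (K ∙ v)} := by
  have lines : {n : Submodule K V // finrank K n = 1 ∧ R n} ≃ {p : ℙ K V // R p.submodule} :=
    (Equiv.subtypeSubtypeEquivSubtypeInter _ R).symm.trans
      ((equivSubmodule K V).subtypeEquiv fun _ => Iff.rfl).symm
  have vectors : {v : V // v ≠ 0 ∧ R (K ∙ v)} ≃ {p : ℙ K V // R p.submodule} × Kˣ :=
    (Equiv.subtypeSubtypeEquivSubtypeInter _ fun v => R (K ∙ v)).symm.trans <|
      ((nonZeroEquivProjectivizationProdUnits K V).subtypeEquiv fun _ => Iff.rfl).trans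
        (Equiv.prodSubtypeFstEquivSubtypeProd (p := fun p : ℙ K V => R p.submodule))
  rw [Nat.card_congr lines, Nat.card_congr vectors, Nat.card_prod]

end Projectivization

section DotProduct

variable {R : Type*} [CommSemiring R] {ι : Type*} [Fintype ι]

theorem forall_mem_span_singleton_dotProduct_self_eq_zero_iff {x : ι → R} (hx : x ≠ 0) :
    (∀ v ∈ R ∙ x, v ≠ 0 → v ⬝ᵥ v = 0) ↔ x ⬝ᵥ x = 0 := by
  refine ⟨fun h => h x (Submodule.mem_span_singleton_self x) hx, fun h v hv _ => ?_⟩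
  obtain ⟨a, rfl⟩ := Submodule.mem_span_singleton.1 hv
  simp [h]

theorem forall_mem_span_singleton_dotProduct_eq_zero_iff_s13 {x y : ι → R} :
    (∀ v ∈ R ∙ x, ∀ w ∈ R ∙ y, v ⬝ᵥ w = 0) ↔ x ⬝ᵥ y = 0 := by
  refine ⟨fun h => h x (Submodule.mem_span_singleton_self x) y
    (Submodule.mem_span_singleton_self y), fun h v hv w hw => ?_⟩
  obtain ⟨a, rfl⟩ := Submodule.mem_span_singleton.1 hv
  obtain ⟨b, rfl⟩ := Submodule.mem_span_singleton.1 hw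
  simp [h]

end DotProduct

theorem card_isotropic_lines_perp_mul_card_units {K ι σ : Type*} [Field K] [Fintype ι]
    (u : σ → ι → K) :
    Nat.card {n : Submodule K (ι → K) // finrank K n = 1 ∧
      (∀ v ∈ n, v ≠ 0 → v ⬝ᵥ v = 0) ∧ ∃ i, ∀ v ∈ n, ∀ w ∈ K ∙ u i, v ⬝ᵥ w = 0} * Nat.card Kˣ =
      Nat.card {x : ι → K // x ≠ 0 ∧ x ⬝ᵥ x = 0 ∧ ∃ i, x ⬝ᵥ u i = 0} := by
  rw [Projectivization.card_lines_mul_card_units]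
  refine Nat.card_congr (Equiv.subtypeEquivRight fun x => and_congr_right fun hx => ?_)
  simp_rw [forall_mem_span_singleton_dotProduct_self_eq_zero_iff hx,
    forall_mem_span_singleton_dotProduct_eq_zero_iff_s13]

namespace Matrix.HasOrthogonalRows

variable {R : Type*} {ι : Type*} [Fintype ι] [DecidableEq ι] {A : Matrix ι ι R}

theorem mul_transpose_eq_diagonal [CommSemiring R] (hA : A.HasOrthogonalRows) :
    A * Aᵀ = diagonal fun i => A i ⬝ᵥ A i :=
  (mul_transpose_self_isDiag_iff_hasOrthogonalRows.2 hA).diagonal_diag.symm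

theorem vecMul_dotProduct_vecMul [CommSemiring R] (hA : A.HasOrthogonalRows) (c d : ι → R) :
    c ᵥ* A ⬝ᵥ d ᵥ* A = ∑ i, c i * d i * (A i ⬝ᵥ A i) := by
  rw [← mulVec_transpose A d, dotProduct_mulVec, vecMul_vecMul, hA.mul_transpose_eq_diagonal,
    dotProduct]
  simp only [vecMul_diagonal]
  exact Finset.sum_congr rfl fun i _ => by ring

theorem vecMul_dotProduct_row [CommSemiring R] (hA : A.HasOrthogonalRows) (c : ι → R) (j : ι) :
    c ᵥ* A ⬝ᵥ A j = c j * (A j ⬝ᵥ A j) := by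
  rw [dotProduct_comm]
  change (A *ᵥ c ᵥ* A) j = _
  rw [← mulVec_transpose, mulVec_mulVec, hA.mul_transpose_eq_diagonal, mulVec_diagonal, mul_comm]

theorem isUnit [CommRing R] (hA : A.HasOrthogonalRows) (hw : ∀ i, IsUnit (A i ⬝ᵥ A i)) :
    IsUnit A := by
  have hdet : IsUnit (A * Aᵀ).det := by
    rw [hA.mul_transpose_eq_diagonal, det_diagonal]
    exact IsUnit.prod_univ_iff.2 hw
  rw [det_mul, det_transpose] at hdet
  exact (isUnit_iff_isUnit_det A).2 (isUnit_of_mul_isUnit_left hdet)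

theorem card_isotropic_perp_row [Field R] (hA : A.HasOrthogonalRows)
    (hw : ∀ i, A i ⬝ᵥ A i ≠ 0) :
    Nat.card {x : ι → R // x ≠ 0 ∧ x ⬝ᵥ x = 0 ∧ ∃ i, x ⬝ᵥ A i = 0} =
      Nat.card {c : ι → R // c ≠ 0 ∧ ∑ i, c i * c i * (A i ⬝ᵥ A i) = 0 ∧ ∃ i, c i = 0} := by
  have hunit := hA.isUnit fun i => (hw i).isUnit
  have hbij : Function.Bijective fun c : ι → R => c ᵥ* A :=
    ⟨vecMul_injective_iff_isUnit.2 hunit, vecMul_surjective_iff_isUnit.2 hunit⟩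
  refine (Nat.card_congr ((Equiv.ofBijective _ hbij).subtypeEquiv fun c => ?_)).symm
  simp_rw [Equiv.ofBijective_apply, hA.vecMul_dotProduct_vecMul, hA.vecMul_dotProduct_row,
    mul_eq_zero_iff_right (hw _), hbij.1.ne_iff' (zero_vecMul A)]

end Matrix.HasOrthogonalRows

theorem card_isotropic_vectors_with_zero_coord :
    Nat.card {c : Fin 5 → ZMod 3 //
      c ≠ 0 ∧ ∑ i, c i * c i * ![-1, -1, -1, -1, 1] i = 0 ∧ ∃ i, c i = 0} = 48 := by
  rw [Nat.card_eq_fintype_card]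
  decide

/-- Let `l 0, l 1, l 2, l 3` (denoted `α, β, γ, δ`) and `l 4` (denoted `t`) be pairwise
perpendicular lines in `𝔽₃⁵` with `q(α) = q(β) = q(γ) = q(δ) = −1` and `q(t) = 1`.
Then exactly `24` isotropic lines are perpendicular to at least one of `α, β, γ, δ, t`. -/
theorem twentyfour_isotropic_lines_perp_to_cross
    (l : Fin 5 → Submodule (ZMod 3) (Fin 5 → ZMod 3))
    (hrk : ∀ i, Module.finrank (ZMod 3) (l i) = 1)
    (hperp : ∀ i j : Fin 5, i ≠ j →
      ∀ v : Fin 5 → ZMod 3, v ∈ l i → ∀ w : Fin 5 → ZMod 3, w ∈ l j →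
        (∑ k, v k * w k) = 0)
    (hqneg : ∀ i : Fin 5, i ≠ 4 →
      ∀ v : Fin 5 → ZMod 3, v ∈ l i → v ≠ 0 → (∑ k, v k * v k) = -1)
    (hqt : ∀ v : Fin 5 → ZMod 3, v ∈ l 4 → v ≠ 0 → (∑ k, v k * v k) = 1) :
    Nat.card {n : Submodule (ZMod 3) (Fin 5 → ZMod 3) //
      Module.finrank (ZMod 3) n = 1 ∧
      (∀ v : Fin 5 → ZMod 3, v ∈ n → v ≠ 0 → (∑ k, v k * v k) = 0) ∧
      ∃ i : Fin 5, ∀ v : Fin 5 → ZMod 3, v ∈ n → ∀ w : Fin 5 → ZMod 3, w ∈ l i →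
        (∑ k, v k * w k) = 0} = 24 := by
  obtain ⟨u, hu, hl⟩ : ∃ u : Matrix (Fin 5) (Fin 5) (ZMod 3), (∀ i, u i ≠ 0) ∧
      ∀ i, l i = ZMod 3 ∙ u i :=
    ⟨fun i => (Projectivization.mk'' (l i) (hrk i)).rep, fun _ => Projectivization.rep_nonzero _,
      fun i => (Projectivization.submodule_mk'' (l i) (hrk i)).symm.trans
        (Projectivization.submodule_eq _)⟩
  have hmem : ∀ i, u i ∈ l i := fun i => (hl i).symm ▸ Submodule.mem_span_singleton_self _
  have hw : ∀ i, u i ⬝ᵥ u i = ![-1, -1, -1, -1, 1] i := by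
    intro i
    fin_cases i
    all_goals first | exact hqt _ (hmem 4) (hu 4) | exact hqneg _ (by decide) _ (hmem _) (hu _)
  have hA : u.HasOrthogonalRows := fun i j hij => hperp i j hij _ (hmem i) _ (hmem j)
  have hcount := card_isotropic_lines_perp_mul_card_units u
  rw [hA.card_isotropic_perp_row fun i => by rw [hw]; fin_cases i <;> decide] at hcount
  simp_rw [hw, card_isotropic_vectors_with_zero_coord, Nat.card_eq_fintype_card (α := (ZMod 3)ˣ),
    ZMod.card_units] at hcount
  simp_rw [hl]
  exact Nat.eq_of_mul_eq_mul_right two_pos hcount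
end

section
/- Consider the 12 points of P³(ℚ) represented by the following vectors in ℚ⁴: the standard basis vectors e₁, e₂, e₃, e₄ and the eight vectors (1, ε₂, ε₃, ε₄) with ε₂, ε₃, ε₄ ∈ {1, −1}. Then: (a) there are exactly 16 projective lines in P³(ℚ) containing at least three of these 12 points; (b) each of these 16 lines contains exactly three of the 12 points; and (c) each of the 12 points lies on exactly 4 of these 16 lines. -/
/-!
Any two of the twelve vectors are linearly independent, so a plane containing three of the points
is spanned by any two of them; in particular a rich line is determined by the set of points on it.
Whether a vector lies in the span of two others is decided by the vanishing of all `3 × 3` minors,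
which turns the whole configuration into a finite check on integer vectors. The sixteen lines are
`e₁` with each antipodal pair `(1, ε), (1, -ε)`, and, for `k = 2, 3, 4`, `eₖ` with each pair of
sign vectors differing only in the coordinate `k`.
-/

open Module Submodule Finset Function

section Minors

variable {R K ι : Type*}

def minor [CommRing R] (u w : ι → R) (a b : ι) : R := u a * w b - u b * w a

/-- The `3 × 3` minor on the columns `a, b, c` of the matrix with rows `u, w, x`, expanded along
the column `c`. -/
def minor3 [CommRing R] (u w x : ι → R) (a b c : ι) : R :=
  minor u w a b * x c - minor x w a b * u c - minor u x a b * w c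

theorem map_minor3 {S : Type*} [CommRing R] [CommRing S] (f : R →+* S) (u w x : ι → R)
    (a b c : ι) : minor3 (f ∘ u) (f ∘ w) (f ∘ x) a b c = f (minor3 u w x a b c) := by
  simp only [minor3, minor, comp_apply, map_sub, map_mul]

theorem map_minor {S : Type*} [CommRing R] [CommRing S] (f : R →+* S) (u w : ι → R)
    (a b : ι) : minor (f ∘ u) (f ∘ w) a b = f (minor u w a b) := by
  simp only [minor, comp_apply, map_sub, map_mul]

variable [Field K] {u w x : ι → K} {a b : ι}

theorem linearIndependent_pair_of_minor_ne_zero (h : minor u w a b ≠ 0) :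
    LinearIndependent K ![u, w] := by
  refine LinearIndependent.pair_iff.mpr fun s t hst => ?_
  have ha := congrFun hst a
  have hb := congrFun hst b
  simp only [Pi.add_apply, Pi.smul_apply, smul_eq_mul, Pi.zero_apply] at ha hb
  unfold minor at h
  constructor
  · refine (mul_eq_zero.mp ?_).resolve_right h
    linear_combination w b * ha - w a * hb
  · refine (mul_eq_zero.mp ?_).resolve_right h
    linear_combination u a * hb - u b * ha

/-- On the columns of the nonzero minor, the `3 × 3` minors vanishing is Cramer's rule. -/
theorem mem_span_pair_iff_minor3_eq_zero (h : minor u w a b ≠ 0) :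
    x ∈ span K {u, w} ↔ ∀ a b c, minor3 u w x a b c = 0 := by
  constructor
  · intro hx a b c
    obtain ⟨s, t, rfl⟩ := mem_span_pair.mp hx
    simp only [minor3, minor, Pi.add_apply, Pi.smul_apply, smul_eq_mul]
    ring
  · intro hx
    refine mem_span_pair.mpr ⟨minor x w a b / minor u w a b, minor u x a b / minor u w a b, ?_⟩
    funext c
    simp only [Pi.add_apply, Pi.smul_apply, smul_eq_mul]
    have hc := hx a b c
    unfold minor3 at hc
    field_simp
    linear_combination -hc

end Minors

section PairwiseIndependent

variable {K V ι : Type*} [DivisionRing K] [AddCommGroup V] [Module K V]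

theorem finrank_span_pair {u w : V} (h : LinearIndependent K ![u, w]) :
    finrank K (span K {u, w}) = 2 := by
  have := finrank_span_eq_card h
  rwa [Matrix.range_cons, Matrix.range_cons, Matrix.range_empty, Set.union_empty,
    Set.singleton_union, Fintype.card_fin] at this

theorem eq_span_pair_of_finrank_eq_two {L : Submodule K V} (hL : finrank K L = 2) {u w : V}
    (hu : u ∈ L) (hw : w ∈ L) (h : LinearIndependent K ![u, w]) : L = span K {u, w} := by
  have : Module.Finite K L := Module.finite_of_finrank_eq_succ hL
  refine (eq_of_le_of_finrank_eq ?_ ?_).symm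
  · simpa [span_le, Set.insert_subset_iff] using ⟨hu, hw⟩
  · rw [finrank_span_pair h, hL]

variable (K) {v : ι → V}

noncomputable def pointIndices [Fintype ι] (v : ι → V) (L : Submodule K V) : Finset ι := by
  classical exact univ.filter fun k => v k ∈ L

def richLines (v : ι → V) : Set (Submodule K V) :=
  {L | finrank K L = 2 ∧ 3 ≤ ({ℓ ∈ Set.range fun i => K ∙ v i | ℓ ≤ L} : Set _).ncard}

variable {K}

theorem mem_pointIndices [Fintype ι] {L : Submodule K V} {k : ι} :
    k ∈ pointIndices K v L ↔ v k ∈ L := by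
  classical simp [pointIndices]

theorem injective_span_singleton_of_pairwise
    (hv : Pairwise fun i j => LinearIndependent K ![v i, v j]) : Injective fun i => K ∙ v i := by
  intro i j hij
  by_contra hne
  obtain ⟨a, ha⟩ := mem_span_singleton.mp ((span_singleton_le_iff_mem _ _).mp hij.le)
  exact (linearIndependent_fin2.mp (hv hne)).2 a ha

theorem eq_of_finrank_eq_two_of_mem (hv : Pairwise fun i j => LinearIndependent K ![v i, v j])
    {L L' : Submodule K V} (hL : finrank K L = 2) (hL' : finrank K L' = 2) {i j : ι} (hij : i ≠ j)
    (hi : v i ∈ L) (hj : v j ∈ L) (hi' : v i ∈ L') (hj' : v j ∈ L') : L = L' :=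
  (eq_span_pair_of_finrank_eq_two hL hi hj (hv hij)).trans
    (eq_span_pair_of_finrank_eq_two hL' hi' hj' (hv hij)).symm

variable [Fintype ι]

theorem ncard_points_le_eq (hv : Pairwise fun i j => LinearIndependent K ![v i, v j])
    (L : Submodule K V) :
    ({ℓ ∈ Set.range fun i => K ∙ v i | ℓ ≤ L} : Set _).ncard = #(pointIndices K v L) := by
  have : {ℓ ∈ Set.range fun i => K ∙ v i | ℓ ≤ L} = (fun i => K ∙ v i) '' pointIndices K v L := by
    ext ℓ
    constructor
    · rintro ⟨⟨i, rfl⟩, hi⟩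
      exact ⟨i, mem_pointIndices.mpr ((span_singleton_le_iff_mem _ _).mp hi), rfl⟩
    · rintro ⟨i, hi, rfl⟩
      exact ⟨⟨i, rfl⟩, (span_singleton_le_iff_mem _ _).mpr (mem_pointIndices.mp hi)⟩
  rw [this, Set.ncard_image_of_injective _ (injective_span_singleton_of_pairwise hv),
    Set.ncard_coe_finset]

theorem mem_richLines_iff (hv : Pairwise fun i j => LinearIndependent K ![v i, v j])
    {L : Submodule K V} : L ∈ richLines K v ↔ finrank K L = 2 ∧ 3 ≤ #(pointIndices K v L) := by
  show _ ∧ _ ↔ _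
  rw [ncard_points_le_eq hv]

theorem injOn_pointIndices_richLines (hv : Pairwise fun i j => LinearIndependent K ![v i, v j]) :
    Set.InjOn (pointIndices K v) (richLines K v) := by
  intro L hL L' hL' h
  rw [mem_richLines_iff hv] at hL hL'
  obtain ⟨i, hi, j, hj, hij⟩ := one_lt_card.mp (by omega : 1 < #(pointIndices K v L))
  have hi' : i ∈ pointIndices K v L' := h ▸ hi
  have hj' : j ∈ pointIndices K v L' := h ▸ hj
  simp only [mem_pointIndices] at hi hj hi' hj'
  exact eq_of_finrank_eq_two_of_mem hv hL.1 hL'.1 hij hi hj hi' hj'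

theorem image_pointIndices_richLines (hv : Pairwise fun i j => LinearIndependent K ![v i, v j])
    (S : Set (Finset ι))
    (hS : ∀ s ∈ S, 3 ≤ #s ∧ ∃ i j, i ≠ j ∧ pointIndices K v (span K {v i, v j}) = s)
    (hcollinear : ∀ i j k, i ≠ j → k ≠ i → k ≠ j → v k ∈ span K {v i, v j} →
      ∃ s ∈ S, i ∈ s ∧ j ∈ s) :
    pointIndices K v '' richLines K v = S := by
  ext s
  constructor
  · rintro ⟨L, hL, rfl⟩
    rw [mem_richLines_iff hv] at hL
    obtain ⟨i, j, k, hi, hj, hk, hij, hik, hjk⟩ := two_lt_card_iff.mp hL.2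
    simp only [mem_pointIndices] at hi hj hk
    have hL_eq := eq_span_pair_of_finrank_eq_two hL.1 hi hj (hv hij)
    obtain ⟨s, hs, his, hjs⟩ := hcollinear i j k hij hik.symm hjk.symm (hL_eq ▸ hk)
    obtain ⟨-, a, b, hab, rfl⟩ := hS s hs
    rw [mem_pointIndices] at his hjs
    rwa [eq_of_finrank_eq_two_of_mem hv hL.1 (finrank_span_pair (hv hab)) hij hi hj his hjs]
  · intro hs
    obtain ⟨h3, i, j, hij, rfl⟩ := hS s hs
    exact ⟨_, (mem_richLines_iff hv).mpr ⟨finrank_span_pair (hv hij), h3⟩, rfl⟩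

theorem ncard_richLines (hv : Pairwise fun i j => LinearIndependent K ![v i, v j]) :
    (richLines K v).ncard = (pointIndices K v '' richLines K v).ncard :=
  (injOn_pointIndices_richLines hv).ncard_image.symm

theorem ncard_richLines_through (hv : Pairwise fun i j => LinearIndependent K ![v i, v j])
    (i : ι) :
    ({L ∈ richLines K v | K ∙ v i ≤ L} : Set _).ncard =
      ({s ∈ pointIndices K v '' richLines K v | i ∈ s} : Set _).ncard := by
  have : {s ∈ pointIndices K v '' richLines K v | i ∈ s} =
      pointIndices K v '' {L ∈ richLines K v | K ∙ v i ≤ L} := by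
    ext s
    constructor
    · rintro ⟨⟨L, hL, rfl⟩, hi⟩
      exact ⟨L, ⟨hL, (span_singleton_le_iff_mem _ _).mpr (mem_pointIndices.mp hi)⟩, rfl⟩
    · rintro ⟨L, ⟨hL, hi⟩, rfl⟩
      exact ⟨⟨L, hL, rfl⟩, mem_pointIndices.mpr ((span_singleton_le_iff_mem _ _).mp hi)⟩
  rw [this, ((injOn_pointIndices_richLines hv).mono (Set.sep_subset _ _)).ncard_image]

end PairwiseIndependent

namespace F4ShortRoots

def repZ : Fin 12 → Fin 4 → ℤ :=
  ![![1, 0, 0, 0], ![0, 1, 0, 0], ![0, 0, 1, 0], ![0, 0, 0, 1],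
    ![1, 1, 1, 1], ![1, 1, 1, -1], ![1, 1, -1, 1], ![1, 1, -1, -1],
    ![1, -1, 1, 1], ![1, -1, 1, -1], ![1, -1, -1, 1], ![1, -1, -1, -1]]

def rep (i : Fin 12) : Fin 4 → ℚ := Int.castRingHom ℚ ∘ repZ i

def lineSet : Fin 16 → Finset (Fin 12) :=
  ![{0, 4, 11}, {0, 5, 10}, {0, 6, 9}, {0, 7, 8},
    {1, 4, 8}, {1, 5, 9}, {1, 6, 10}, {1, 7, 11},
    {2, 4, 6}, {2, 5, 7}, {2, 8, 10}, {2, 9, 11},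
    {3, 4, 5}, {3, 6, 7}, {3, 8, 9}, {3, 10, 11}]

def IsCollinear (i j k : Fin 12) : Prop := ∀ a b c, minor3 (repZ i) (repZ j) (repZ k) a b c = 0

instance (i j k : Fin 12) : Decidable (IsCollinear i j k) := by
  unfold IsCollinear; infer_instance

theorem exists_minor_repZ_ne_zero :
    ∀ i j : Fin 12, i ≠ j → ∃ a b, minor (repZ i) (repZ j) a b ≠ 0 := by
  decide +kernel

theorem exists_pair_isCollinear_iff_mem_lineSet :
    ∀ l, ∃ i ∈ lineSet l, ∃ j ∈ lineSet l, i ≠ j ∧ ∀ k, IsCollinear i j k ↔ k ∈ lineSet l := by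
  decide +kernel

theorem exists_lineSet_of_isCollinear : ∀ i j k : Fin 12, i < j → k ≠ i → k ≠ j →
    IsCollinear i j k → ∃ l, i ∈ lineSet l ∧ j ∈ lineSet l := by
  decide +kernel

theorem lineSet_injective : Injective lineSet := by decide +kernel

theorem card_lineSet : ∀ l, #(lineSet l) = 3 := by decide +kernel

theorem card_filter_mem_lineSet : ∀ i, #{l | i ∈ lineSet l} = 4 := by decide +kernel

theorem pairwise_linearIndependent_rep :
    Pairwise fun i j => LinearIndependent ℚ ![rep i, rep j] := by
  intro i j hij
  obtain ⟨a, b, h⟩ := exists_minor_repZ_ne_zero i j hij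
  refine linearIndependent_pair_of_minor_ne_zero (a := a) (b := b) ?_
  rwa [rep, rep, map_minor, map_ne_zero_iff _ (RingHom.injective_int _)]

theorem mem_span_rep_iff {i j : Fin 12} (hij : i ≠ j) (k : Fin 12) :
    rep k ∈ span ℚ {rep i, rep j} ↔ IsCollinear i j k := by
  obtain ⟨a, b, h⟩ := exists_minor_repZ_ne_zero i j hij
  rw [mem_span_pair_iff_minor3_eq_zero (a := a) (b := b)]
  · simp only [rep, map_minor3, map_eq_zero_iff _ (RingHom.injective_int _), IsCollinear]
  · rwa [rep, rep, map_minor, map_ne_zero_iff _ (RingHom.injective_int _)]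

theorem image_pointIndices_richLines_rep :
    pointIndices ℚ rep '' richLines ℚ rep = Set.range lineSet := by
  refine image_pointIndices_richLines pairwise_linearIndependent_rep _ ?_ ?_
  · rintro _ ⟨l, rfl⟩
    obtain ⟨i, -, j, -, hij, hl⟩ := exists_pair_isCollinear_iff_mem_lineSet l
    refine ⟨(card_lineSet l).ge, i, j, hij, ?_⟩
    ext k
    rw [mem_pointIndices, mem_span_rep_iff hij, hl]
  · intro i j k hij hki hkj hk
    rcases hij.lt_or_gt with hlt | hgt
    · obtain ⟨l, hl⟩ :=
        exists_lineSet_of_isCollinear i j k hlt hki hkj ((mem_span_rep_iff hij k).mp hk)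
      exact ⟨_, ⟨l, rfl⟩, hl⟩
    · rw [Set.pair_comm] at hk
      obtain ⟨l, hl⟩ :=
        exists_lineSet_of_isCollinear j i k hgt hkj hki ((mem_span_rep_iff hij.symm k).mp hk)
      exact ⟨_, ⟨l, rfl⟩, hl.symm⟩

theorem ncard_setOf_mem_range_lineSet (i : Fin 12) :
    ({s ∈ Set.range lineSet | i ∈ s} : Set _).ncard = 4 := by
  have : {s ∈ Set.range lineSet | i ∈ s} =
      lineSet '' ↑({l | i ∈ lineSet l} : Finset (Fin 16)) := by
    ext s
    constructor
    · rintro ⟨⟨l, rfl⟩, hi⟩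
      exact ⟨l, by simpa using hi, rfl⟩
    · rintro ⟨l, hi, rfl⟩
      exact ⟨⟨l, rfl⟩, by simpa using hi⟩
  rw [this, Set.ncard_image_of_injective _ lineSet_injective, Set.ncard_coe_finset,
    card_filter_mem_lineSet]

theorem exists_rep_eq_iff (v : Fin 4 → ℚ) : (∃ i, rep i = v) ↔
    (∃ i : Fin 4, v = Pi.single i 1) ∨ (v 0 = 1 ∧ ∀ j : Fin 4, j ≠ 0 → (v j = 1 ∨ v j = -1)) := by
  constructor
  · rintro ⟨i, rfl⟩
    revert i
    decide
  · rintro (⟨i, rfl⟩ | ⟨h0, hs⟩)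
    · revert i
      decide
    · have hv : v = ![1, v 1, v 2, v 3] := by
        ext j
        fin_cases j <;> simp [h0]
      rw [hv]
      rcases hs 1 (by decide) with h1 | h1 <;> rcases hs 2 (by decide) with h2 | h2 <;>
        rcases hs 3 (by decide) with h3 | h3 <;> rw [h1, h2, h3] <;> decide

theorem setOf_span_eq_range_span_rep :
    {ℓ : Submodule ℚ (Fin 4 → ℚ) | ∃ v : Fin 4 → ℚ,
      ((∃ i : Fin 4, v = Pi.single i 1) ∨
        (v 0 = 1 ∧ ∀ j : Fin 4, j ≠ 0 → (v j = 1 ∨ v j = -1))) ∧ ℓ = span ℚ {v}} =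
      Set.range fun i => ℚ ∙ rep i := by
  ext ℓ
  constructor
  · rintro ⟨v, hv, rfl⟩
    obtain ⟨i, rfl⟩ := (exists_rep_eq_iff v).mpr hv
    exact ⟨i, rfl⟩
  · rintro ⟨i, rfl⟩
    exact ⟨rep i, (exists_rep_eq_iff _).mp ⟨i, rfl⟩, rfl⟩

end F4ShortRoots

open F4ShortRoots in
/-- Consider the `12` points of `P³(ℚ)` given by the four standard basis vectors
`e₁,…,e₄` and the eight vectors `(1, ±1, ±1, ±1)` (points determined by the `24` short
roots of `F₄`). There are exactly `16` projective lines containing at least three of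
these points; each such line contains exactly three of them, and each of the `12`
points lies on exactly `4` of the `16` lines. -/
theorem twelve_points_sixteen_lines_configuration
    (pts : Set (Submodule ℚ (Fin 4 → ℚ)))
    (hpts : pts = {ℓ | ∃ v : Fin 4 → ℚ,
      ((∃ i : Fin 4, v = Pi.single i 1) ∨
        (v 0 = 1 ∧ ∀ j : Fin 4, j ≠ 0 → (v j = 1 ∨ v j = -1))) ∧
      ℓ = Submodule.span ℚ {v}})
    (lines : Set (Submodule ℚ (Fin 4 → ℚ)))
    (hlines : lines = {L : Submodule ℚ (Fin 4 → ℚ) | Module.finrank ℚ L = 2 ∧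
      3 ≤ ({ℓ ∈ pts | ℓ ≤ L} : Set (Submodule ℚ (Fin 4 → ℚ))).ncard}) :
    pts.ncard = 12 ∧
    lines.ncard = 16 ∧
    (∀ L ∈ lines, ({ℓ ∈ pts | ℓ ≤ L} : Set (Submodule ℚ (Fin 4 → ℚ))).ncard = 3) ∧
    (∀ ℓ ∈ pts, ({L ∈ lines | ℓ ≤ L} : Set (Submodule ℚ (Fin 4 → ℚ))).ncard = 4) := by
  have hv := pairwise_linearIndependent_rep
  obtain rfl : pts = Set.range fun i => ℚ ∙ rep i := hpts.trans setOf_span_eq_range_span_rep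
  obtain rfl : lines = richLines ℚ rep := hlines
  refine ⟨?_, ?_, fun L hL => ?_, ?_⟩
  · rw [Set.ncard_range_of_injective (injective_span_singleton_of_pairwise hv), Nat.card_fin]
  · rw [ncard_richLines hv, image_pointIndices_richLines_rep, ← Set.image_univ,
      Set.ncard_image_of_injective _ lineSet_injective, Set.ncard_univ, Nat.card_fin]
  · obtain ⟨l, hl⟩ : pointIndices ℚ rep L ∈ Set.range lineSet :=
      image_pointIndices_richLines_rep ▸ Set.mem_image_of_mem _ hL
    rw [ncard_points_le_eq hv, ← hl, card_lineSet]
  · rintro _ ⟨i, rfl⟩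
    rw [ncard_richLines_through hv, image_pointIndices_richLines_rep,
      ncard_setOf_mem_range_lineSet]
end
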